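/- arXiv:2004.02229 — 5 statements merged into one kernel-verified Lean document; each statement's English description precedes it below -/
import Mathlib

section
/- (Correctness of the wrap$_3$ protocol.) Let $L \geq 1$ and let $a_1,a_2,a_3,x_1,x_2,x_3 \in [0,L-1]$. Define $r_i = (a_i + x_i) \bmod L$, $\beta_i = \mathrm{wrap}_2(a_i,x_i,L)$ for $i=1,2,3$, let $r = (r_1+r_2+r_3) \bmod L$, $\delta_e = \mathrm{wrap}_{3e}(r_1,r_2,r_3,L)$, $x = (x_1+x_2+x_3)\bmod L$, $\alpha_e = \mathrm{wrap}_{3e}(x_1,x_2,x_3,L)$, and let $\eta = 1$ if $x \geq r+1$ and $0$ otherwise. Then $\mathrm{wrap}_{3e}(a_1,a_2,a_3,L) = \beta_1 + \beta_2 + \beta_3 + \delta_e - \eta - \alpha_e$ as integers. -/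
theorem wrap3_protocol_correct (L : ℤ) (hL : 1 ≤ L) (a x : Fin 3 → ℤ)
    (ha : ∀ i, 0 ≤ a i ∧ a i ≤ L - 1) (hx : ∀ i, 0 ≤ x i ∧ x i ≤ L - 1)
    (r : Fin 3 → ℤ) (hr : ∀ i, r i = (a i + x i) % L)
    (β : Fin 3 → ℤ) (hβ : ∀ i, β i = (a i + x i) / L)
    (rr : ℤ) (hrr : rr = (r 0 + r 1 + r 2) % L)
    (δe : ℤ) (hδe : δe = (r 0 + r 1 + r 2) / L)
    (xx : ℤ) (hxx : xx = (x 0 + x 1 + x 2) % L)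
    (αe : ℤ) (hαe : αe = (x 0 + x 1 + x 2) / L)
    (η : ℤ) (hη : η = if rr + 1 ≤ xx then 1 else 0) :
    (a 0 + a 1 + a 2) / L = β 0 + β 1 + β 2 + δe - η - αe := by
  have hL0 : L ≠ 0 := by omega
  have hLpos : 0 < L := by omega
  have hdm : ∀ i : Fin 3, L * β i + r i = a i + x i := by
    intro i
    rw [hβ i, hr i]
    exact Int.mul_ediv_add_emod _ _
  have hdm2 : L * δe + rr = r 0 + r 1 + r 2 := by
    rw [hδe, hrr]; exact Int.mul_ediv_add_emod _ _
  have hdm3 : L * αe + xx = x 0 + x 1 + x 2 := by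
    rw [hαe, hxx]; exact Int.mul_ediv_add_emod _ _
  have hrr0 : 0 ≤ rr := hrr ▸ Int.emod_nonneg _ hL0
  have hrr1 : rr < L := hrr ▸ Int.emod_lt_of_pos _ hLpos
  have hxx0 : 0 ≤ xx := hxx ▸ Int.emod_nonneg _ hL0
  have hxx1 : xx < L := hxx ▸ Int.emod_lt_of_pos _ hLpos
  have key : a 0 + a 1 + a 2
      = (rr - xx) + (β 0 + β 1 + β 2 + δe - αe) * L := by
    have h0 := hdm 0; have h1 := hdm 1; have h2 := hdm 2
    ring_nf
    ring_nf at h0 h1 h2 hdm2 hdm3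
    linarith
  rw [key, Int.add_mul_ediv_right _ _ hL0]
  have ht : (rr - xx) / L = -η := by
    rw [hη]
    split
    · have : rr - xx = (L + rr - xx) + (-1) * L := by ring
      rw [this, Int.add_mul_ediv_right _ _ hL0,
        Int.ediv_eq_zero_of_lt (by omega) (by omega)]
      norm_num
    · rw [Int.ediv_eq_zero_of_lt (by omega) (by omega)]
      norm_num
  rw [ht]; ring
end

section
/- (Correctness of wrap$_3$ mod 2.) With the setup of the wrap$_3$ protocol, $\mathrm{wrap}_3(a_1,a_2,a_3,L) \equiv \beta_1 + \beta_2 + \beta_3 + \delta - \eta - \alpha \pmod 2$, where $\delta = \delta_e \bmod 2$, $\alpha = \alpha_e \bmod 2$, and $\mathrm{wrap}_3 = \mathrm{wrap}_{3e} \bmod 2$. -/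
theorem wrap3_protocol_mod2 (L : ℤ) (hL : 1 ≤ L) (a x : Fin 3 → ℤ)
    (ha : ∀ i, 0 ≤ a i ∧ a i ≤ L - 1) (hx : ∀ i, 0 ≤ x i ∧ x i ≤ L - 1)
    (r : Fin 3 → ℤ) (hr : ∀ i, r i = (a i + x i) % L)
    (β : Fin 3 → ℤ) (hβ : ∀ i, β i = (a i + x i) / L)
    (rr : ℤ) (hrr : rr = (r 0 + r 1 + r 2) % L)
    (δ : ℤ) (hδ : δ = ((r 0 + r 1 + r 2) / L) % 2)
    (xx : ℤ) (hxx : xx = (x 0 + x 1 + x 2) % L)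
    (α : ℤ) (hα : α = ((x 0 + x 1 + x 2) / L) % 2)
    (η : ℤ) (hη : η = if rr + 1 ≤ xx then 1 else 0) :
    ((a 0 + a 1 + a 2) / L) % 2 ≡ β 0 + β 1 + β 2 + δ - η - α [ZMOD 2] := by
  have hL0 : 0 < L := by omega
  have hLne : L ≠ 0 := by omega
  set δe := (r 0 + r 1 + r 2) / L with hδe
  set αe := (x 0 + x 1 + x 2) / L with hαe
  have eδ : r 0 + r 1 + r 2 = rr + L * δe := by
    rw [hrr, hδe]; exact (Int.emod_add_mul_ediv _ _).symm
  have eα : x 0 + x 1 + x 2 = xx + L * αe := by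
    rw [hxx, hαe]; exact (Int.emod_add_mul_ediv _ _).symm
  have hai : ∀ i, a i + x i = r i + L * β i := by
    intro i; rw [hr, hβ]; exact (Int.emod_add_mul_ediv _ _).symm
  have hrrb : 0 ≤ rr ∧ rr < L := by
    constructor
    · rw [hrr]; exact Int.emod_nonneg _ hLne
    · rw [hrr]; exact Int.emod_lt_of_pos _ hL0
  have hxxb : 0 ≤ xx ∧ xx < L := by
    constructor
    · rw [hxx]; exact Int.emod_nonneg _ hLne
    · rw [hxx]; exact Int.emod_lt_of_pos _ hL0
  have hsum : a 0 + a 1 + a 2 = (rr - xx + η * L) + L * (β 0 + β 1 + β 2 + δe - αe - η) := by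
    have h0 := hai 0
    have h1 := hai 1
    have h2 := hai 2
    ring_nf
    linear_combination h0 + h1 + h2 + eδ - eα
  have hdiv : (a 0 + a 1 + a 2) / L = β 0 + β 1 + β 2 + δe - αe - η := by
    rw [hsum, Int.add_mul_ediv_left _ _ hLne]
    have hs : 0 ≤ rr - xx + η * L ∧ rr - xx + η * L < L := by
      rw [hη]; split <;> constructor <;> nlinarith [hrrb.1, hrrb.2, hxxb.1, hxxb.2]
    rw [Int.ediv_eq_zero_of_lt hs.1 hs.2, zero_add]
  rw [hdiv, hδ, hα]
  show _ % 2 = _ % 2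
  omega
end

section
/- (MSB from wrap: Eq. 8.) Let $L = 2^{\ell}$, $\ell \geq 1$, and let $a_1,a_2,a_3 \in [0,L-1]$ with $a = (a_1+a_2+a_3)\bmod L$. Then $\mathrm{MSB}(a) \equiv \mathrm{MSB}(a_1) + \mathrm{MSB}(a_2) + \mathrm{MSB}(a_3) + \mathrm{wrap}_3(2a_1 \bmod L,\; 2a_2 \bmod L,\; 2a_3 \bmod L,\; L) \pmod 2$, and consequently $\mathrm{DReLU}(a) = \mathrm{MSB}(a_1) \oplus \mathrm{MSB}(a_2) \oplus \mathrm{MSB}(a_3) \oplus \mathrm{wrap}_3(2a_1 \bmod L, 2a_2 \bmod L, 2a_3 \bmod L, L) \oplus 1$. -/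
/-!
Write `L = 2H` with `H = 2^(ℓ-1)`, so `MSB x = x / H`. Then `MSB (S mod L)` is the parity of `S / H`,
and splitting each `aᵢ` into quotient and remainder by `H` gives
`S / H = Σ MSB aᵢ + (Σ aᵢ mod H) / H`. Doubling maps `aᵢ mod H` to `2aᵢ mod L`, so the last term is
exactly the carry `wrap₃(2a₁ mod L, 2a₂ mod L, 2a₃ mod L, L)`.
-/

theorem Nat.add_add_div_eq (a b c n : ℕ) :
    (a + b + c) / n = a / n + b / n + c / n + (a % n + b % n + c % n) / n := by
  rcases n.eq_zero_or_pos with rfl | hn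
  · simp
  have hsplit : a + b + c = (a % n + b % n + c % n) + n * (a / n + b / n + c / n) := by
    have := Nat.div_add_mod a n
    have := Nat.div_add_mod b n
    have := Nat.div_add_mod c n
    linarith
  rw [hsplit, Nat.add_mul_div_left _ _ hn]
  ring

theorem Nat.mul_mod_add_mul_mod_add_mul_mod_div {k : ℕ} (hk : 0 < k) (x y z n : ℕ) :
    (k * x % (k * n) + k * y % (k * n) + k * z % (k * n)) / (k * n) =
      (x % n + y % n + z % n) / n := by
  simp only [Nat.mul_mod_mul_left, ← mul_add]
  exact Nat.mul_div_mul_left _ _ hk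

theorem msb_from_wrap_general (ℓ : ℕ) (hℓ : 1 ≤ ℓ) (a₁ a₂ a₃ : ℕ)
    (a : ℕ) (ha : a = (a₁ + a₂ + a₃) % 2 ^ ℓ)
    (MSB : ℕ → ℕ) (hMSB : ∀ y, MSB y = y / 2 ^ (ℓ - 1))
    (wrap3 : ℕ) (hwrap3 : wrap3 =
      ((2 * a₁ % 2 ^ ℓ + 2 * a₂ % 2 ^ ℓ + 2 * a₃ % 2 ^ ℓ) / 2 ^ ℓ) % 2) :
    MSB a ≡ MSB a₁ + MSB a₂ + MSB a₃ + wrap3 [MOD 2] ∧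
    1 - MSB a = (MSB a₁ + MSB a₂ + MSB a₃ + wrap3 + 1) % 2 := by
  set H := 2 ^ (ℓ - 1)
  have hL : 2 ^ ℓ = 2 * H := by
    rw [← pow_succ']
    congr 1
    omega
  have hMSBa : MSB a = (a₁ + a₂ + a₃) / H % 2 := by
    rw [hMSB, ha, hL, mul_comm, Nat.mod_mul_right_div_self]
  have hwrap : wrap3 = (a₁ % H + a₂ % H + a₃ % H) / H % 2 := by
    rw [hwrap3, hL, Nat.mul_mod_add_mul_mod_add_mul_mod_div two_pos]
  rw [Nat.add_add_div_eq] at hMSBa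
  rw [hMSBa, hwrap, hMSB, hMSB, hMSB]
  constructor
  · unfold Nat.ModEq
    omega
  · omega

theorem msb_from_wrap (ℓ : ℕ) (hℓ : 1 ≤ ℓ) (a₁ a₂ a₃ : ℕ)
    (ha₁ : a₁ < 2 ^ ℓ) (ha₂ : a₂ < 2 ^ ℓ) (ha₃ : a₃ < 2 ^ ℓ)
    (a : ℕ) (ha : a = (a₁ + a₂ + a₃) % 2 ^ ℓ)
    (MSB : ℕ → ℕ) (hMSB : ∀ y, MSB y = y / 2 ^ (ℓ - 1))
    (wrap3 : ℕ) (hwrap3 : wrap3 =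
      ((2 * a₁ % 2 ^ ℓ + 2 * a₂ % 2 ^ ℓ + 2 * a₃ % 2 ^ ℓ) / 2 ^ ℓ) % 2) :
    MSB a ≡ MSB a₁ + MSB a₂ + MSB a₃ + wrap3 [MOD 2] ∧
    1 - MSB a = (MSB a₁ + MSB a₂ + MSB a₃ + wrap3 + 1) % 2 :=
  msb_from_wrap_general ℓ hℓ a₁ a₂ a₃ a ha MSB hMSB wrap3 hwrap3
end

section
/- For $a_1, a_2, a_3 \in [0, L-1]$ with $L = 2^\ell$, the wrap of the doubled shares equals the carry into the top bit: $\mathrm{wrap}_{3e}(2a_1 \bmod L, 2a_2 \bmod L, 2a_3 \bmod L, L) \bmod 2 = \lfloor ((a_1 \bmod 2^{\ell-1}) + (a_2 \bmod 2^{\ell-1}) + (a_3 \bmod 2^{\ell-1}))/2^{\ell-1}\rfloor \bmod 2$. -/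
theorem wrap_doubled_is_carry (ℓ : ℕ) (hℓ : 1 ≤ ℓ) (a₁ a₂ a₃ : ℕ)
    (ha₁ : a₁ < 2 ^ ℓ) (ha₂ : a₂ < 2 ^ ℓ) (ha₃ : a₃ < 2 ^ ℓ) :
    ((2 * a₁ % 2 ^ ℓ + 2 * a₂ % 2 ^ ℓ + 2 * a₃ % 2 ^ ℓ) / 2 ^ ℓ) % 2 =
    ((a₁ % 2 ^ (ℓ - 1) + a₂ % 2 ^ (ℓ - 1) + a₃ % 2 ^ (ℓ - 1)) / 2 ^ (ℓ - 1)) % 2 := by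
  have h : 2 ^ ℓ = 2 * 2 ^ (ℓ - 1) := by
    rw [← pow_succ']
    congr 1
    omega
  rw [h, Nat.mul_mod_mul_left, Nat.mul_mod_mul_left, Nat.mul_mod_mul_left,
    ← Nat.mul_add, ← Nat.mul_add, Nat.mul_div_mul_left _ _ (by norm_num)]
end

section
/- (Private compare correctness of $c[i]$.) Let $x, r$ be $\ell$-bit integers with bits $x[i], r[i] \in \{0,1\}$, $i = 0,\dots,\ell-1$ (index 0 is least significant). Fix $\beta = 0$ and for each $i$ define $u[i] = x[i] - r[i]$, $w[i] = x[i] \oplus r[i]$, and $c[i] = u[i] + 1 + \sum_{k=i+1}^{\ell-1} w[k]$ (as integers). Then there exists an index $i$ with $c[i] = 0$ if and only if $r > x$ (equivalently, $x \geq r$ iff $c[i] \neq 0$ for all $i$). -/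
open Finset in
private lemma sum_bits_lt (b : ℕ → Bool) (ℓ : ℕ) :
    (∑ i ∈ range ℓ, (if b i then 2 ^ i else 0)) < 2 ^ ℓ := by
  induction ℓ with
  | zero => simp
  | succ n ih =>
    rw [sum_range_succ, pow_succ]
    have : (if b n then 2 ^ n else 0) ≤ 2 ^ n := by split <;> simp
    omega

open Finset in
private lemma pc_aux (xb rb : ℕ → Bool) (ℓ : ℕ) :
    (∃ i < ℓ, ((if xb i then (1 : ℤ) else 0) - (if rb i then 1 else 0)) + 1 +
      ∑ k ∈ Finset.Ico (i + 1) ℓ, (if xor (xb k) (rb k) then (1 : ℤ) else 0) = 0)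
    ↔ (∑ i ∈ Finset.range ℓ, (if xb i then 2 ^ i else 0)) <
      (∑ i ∈ Finset.range ℓ, (if rb i then 2 ^ i else 0)) := by
  induction ℓ with
  | zero => simp
  | succ n ih =>
    have hsplit : ∀ i, i < n →
        (∑ k ∈ Finset.Ico (i + 1) (n + 1), (if xor (xb k) (rb k) then (1 : ℤ) else 0))
        = (∑ k ∈ Finset.Ico (i + 1) n, (if xor (xb k) (rb k) then (1 : ℤ) else 0))
          + (if xor (xb n) (rb n) then (1 : ℤ) else 0) := by
      intro i hi
      exact Finset.sum_Ico_succ_top (by omega) _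
    have hnn : ∀ i, (0 : ℤ) ≤
        ∑ k ∈ Finset.Ico (i + 1) n, (if xor (xb k) (rb k) then (1 : ℤ) else 0) :=
      fun i => Finset.sum_nonneg (fun k _ => by split <;> norm_num)
    have hxlt := sum_bits_lt xb n
    have hrlt := sum_bits_lt rb n
    rw [sum_range_succ, sum_range_succ]
    cases hxn : xb n <;> cases hrn : rb n
    · -- both false
      have hxe : (if xb n then 2 ^ n else 0) = 0 := by simp [hxn]
      have hre : (if rb n then 2 ^ n else 0) = 0 := by simp [hrn]
      have hw : (if xor (xb n) (rb n) then (1 : ℤ) else 0) = 0 := by simp [hxn, hrn]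
      simp only [Bool.false_eq_true, if_false, if_true, add_zero]
      rw [← ih]
      constructor
      · rintro ⟨i, hi, hci⟩
        rcases Nat.lt_succ_iff_lt_or_eq.mp hi with hi' | rfl
        · rw [hsplit i hi', hw, add_zero] at hci
          exact ⟨i, hi', hci⟩
        · rw [Finset.Ico_self, Finset.sum_empty] at hci
          simp [hxn, hrn] at hci
      · rintro ⟨i, hi, hci⟩
        exact ⟨i, by omega, by rw [hsplit i hi, hw, add_zero]; exact hci⟩
    · -- xb n = false, rb n = true : both sides true
      have hxe : (if xb n then 2 ^ n else 0) = 0 := by simp [hxn]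
      have hre : (if rb n then 2 ^ n else 0) = 2 ^ n := by simp [hrn]
      simp only [Bool.false_eq_true, if_false, if_true, add_zero]
      constructor
      · intro _; omega
      · intro _
        refine ⟨n, by omega, ?_⟩
        rw [Finset.Ico_self, Finset.sum_empty]
        simp [hxn, hrn]
    · -- xb n = true, rb n = false : both sides false
      have hxe : (if xb n then 2 ^ n else 0) = 2 ^ n := by simp [hxn]
      have hre : (if rb n then 2 ^ n else 0) = 0 := by simp [hrn]
      simp only [Bool.false_eq_true, if_false, if_true, add_zero]
      constructor
      · rintro ⟨i, hi, hci⟩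
        exfalso
        rcases Nat.lt_succ_iff_lt_or_eq.mp hi with hi' | rfl
        · have hw : (if xor (xb n) (rb n) then (1 : ℤ) else 0) = 1 := by simp [hxn, hrn]
          rw [hsplit i hi', hw] at hci
          have hs := hnn i
          have hu : (-1 : ℤ) ≤ (if xb i then (1 : ℤ) else 0) - (if rb i then 1 else 0) := by
            split <;> split <;> norm_num
          linarith
        · rw [Finset.Ico_self, Finset.sum_empty] at hci
          simp [hxn, hrn] at hci
      · intro h
        exfalso
        omega
    · -- both true
      have hxe : (if xb n then 2 ^ n else 0) = 2 ^ n := by simp [hxn]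
      have hre : (if rb n then 2 ^ n else 0) = 2 ^ n := by simp [hrn]
      have hw : (if xor (xb n) (rb n) then (1 : ℤ) else 0) = 0 := by simp [hxn, hrn]
      simp only [if_true]
      rw [add_lt_add_iff_right, ← ih]
      constructor
      · rintro ⟨i, hi, hci⟩
        rcases Nat.lt_succ_iff_lt_or_eq.mp hi with hi' | rfl
        · rw [hsplit i hi', hw, add_zero] at hci
          exact ⟨i, hi', hci⟩
        · rw [Finset.Ico_self, Finset.sum_empty] at hci
          simp [hxn, hrn] at hci
      · rintro ⟨i, hi, hci⟩
        exact ⟨i, by omega, by rw [hsplit i hi, hw, add_zero]; exact hci⟩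

theorem private_compare_correct (ℓ : ℕ) (xb rb : ℕ → Bool)
    (x r : ℕ)
    (hx : x = ∑ i ∈ Finset.range ℓ, (if xb i then 2 ^ i else 0))
    (hr : r = ∑ i ∈ Finset.range ℓ, (if rb i then 2 ^ i else 0))
    (c : ℕ → ℤ)
    (hc : ∀ i, c i = ((if xb i then (1 : ℤ) else 0) - (if rb i then 1 else 0)) + 1 +
      ∑ k ∈ Finset.Ico (i + 1) ℓ, (if xor (xb k) (rb k) then (1 : ℤ) else 0)) :
    (∃ i < ℓ, c i = 0) ↔ x < r := by
  subst hx hr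
  simp only [hc]
  exact pc_aux xb rb ℓ
end
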